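/- arXiv:2004.10444 — 3 statements merged into one kernel-verified Lean document; each statement's English description precedes it below -/
import Mathlib

section
/- Let $R$ be a commutative ring and $I$ a prime ideal of $R$. Then $I$ is real (i.e., $\sum_{i=1}^n u_i^2 \in I$ implies all $u_i \in I$) if and only if the fraction field of $R/I$ is formally real (i.e., $-1$ is not a sum of squares in the fraction field of $R/I$). -/
/-!
`I` is real exactly when `R ⧸ I` is formally real. Formal reality descends along the injection of
`R ⧸ I` into its fraction field, and ascends by clearing denominators: a relation
`-1 = ∑ (aᵢ / b)²` becomes `b² + ∑ aᵢ² = 0` in `R ⧸ I`, forcing `b = 0`. In a field, formal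
reality means that `-1` is not a sum of squares, since `a² + s = 0` with `a ≠ 0` gives
`-1 = s / a²`.
-/

open Finset

def Ideal.IsReal {R : Type*} [CommRing R] (I : Ideal R) : Prop :=
  ∀ (n : ℕ) (u : Fin n → R), (∑ i, u i ^ 2) ∈ I → ∀ i, u i ∈ I

theorem IsSumSq.exists_eq_sum_sq {R : Type*} [Semiring R] {s : R} (hs : IsSumSq s) :
    ∃ (n : ℕ) (v : Fin n → R), s = ∑ i, v i ^ 2 := by
  induction hs with
  | zero => exact ⟨0, ![], by simp⟩
  | @sq_add a s _ ih =>
    obtain ⟨n, v, rfl⟩ := ih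
    exact ⟨n + 1, Fin.cons a v, by simp [Fin.sum_univ_succ, sq]⟩

theorem IsSumSq.map {R S F : Type*} [AddMonoid R] [Mul R] [AddMonoid S] [Mul S] [FunLike F R S]
    [AddMonoidHomClass F R S] [MulHomClass F R S] (f : F) {s : R} (hs : IsSumSq s) :
    IsSumSq (f s) := by
  induction hs with
  | zero => simp
  | sq_add a _ ih => simpa using IsSumSq.sq_add (f a) ih

namespace IsFormallyReal

theorem eq_zero_of_mul_self_eq_zero {R : Type*} [AddCommMonoid R] [Mul R] [IsFormallyReal R]
    {a : R} (h : a * a = 0) : a = 0 := by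
  by_contra ha
  exact not_isSumNonzeroSq_zero (h ▸ IsSumNonzeroSq.sq ha)

theorem of_injective {R S : Type*} [NonAssocSemiring R] [NonAssocSemiring S] [IsFormallyReal S]
    (f : R →+* S) (hf : Function.Injective f) : IsFormallyReal R :=
  of_eq_zero_of_eq_zero_of_mul_self_add fun {s a} hs h ↦ hf <| by
    have := eq_zero_of_add_right (IsSumSq.mul_self (f a)) (hs.map f) (by simpa using congr(f $h))
    simpa using eq_zero_of_mul_self_eq_zero this

end IsFormallyReal

theorem isFormallyReal_iff_sum_sq_eq_zero {R : Type*} [Semiring R] :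
    IsFormallyReal R ↔ ∀ (n : ℕ) (v : Fin n → R), ∑ i, v i ^ 2 = 0 → ∀ i, v i = 0 := by
  constructor
  · intro _ n v hv i
    rw [← add_sum_erase _ _ (mem_univ i), sq] at hv
    exact IsFormallyReal.eq_zero_of_mul_self_eq_zero <|
      IsFormallyReal.eq_zero_of_add_right (IsSumSq.mul_self _)
        (IsSumSq.sum fun j _ ↦ sq (v j) ▸ IsSumSq.mul_self (v j)) hv
  · intro h
    refine IsFormallyReal.of_eq_zero_of_eq_zero_of_mul_self_add fun {s a} hs has ↦ ?_
    obtain ⟨n, v, rfl⟩ := hs.exists_eq_sum_sq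
    exact h (n + 1) (Fin.cons a v) (by simpa [Fin.sum_univ_succ, sq] using has) 0

theorem isFormallyReal_iff_not_isSumSq_neg_one {F : Type*} [Field F] :
    IsFormallyReal F ↔ ¬ IsSumSq (-1 : F) := by
  constructor
  · intro _ hs
    simpa using IsFormallyReal.eq_zero_of_add_right (IsSumSq.mul_self (1 : F)) hs (by simp)
  · intro h
    refine IsFormallyReal.of_eq_zero_of_eq_zero_of_mul_self_add fun {s a} hs has ↦ ?_
    by_contra ha
    refine h ?_
    have : -1 = s * (a⁻¹ * a⁻¹) := by
      rw [eq_neg_of_add_eq_zero_right has]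
      field_simp
    exact this ▸ hs.mul (IsSumSq.mul_self _)

theorem Ideal.isFormallyReal_quotient_iff {R : Type*} [CommRing R] {I : Ideal R} :
    IsFormallyReal (R ⧸ I) ↔ I.IsReal := by
  rw [isFormallyReal_iff_sum_sq_eq_zero]
  constructor
  · intro h n u hu i
    rw [← Quotient.eq_zero_iff_mem] at hu ⊢
    exact h n (Quotient.mk I ∘ u) (by simpa using hu) i
  · intro h n v hv i
    obtain ⟨u, rfl⟩ : ∃ u : Fin n → R, Quotient.mk I ∘ u = v :=
      Quotient.mk_surjective.comp_left v
    rw [Function.comp_apply, Quotient.eq_zero_iff_mem]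
    exact h n u (by rw [← Quotient.eq_zero_iff_mem]; simpa using hv) i

namespace IsLocalization

variable {K S : Type*} [CommRing K] {M : Submonoid K} [CommRing S] [Algebra K S]
  [IsLocalization M S]

theorem exists_mul_self_mul_eq_algebraMap_of_isSumSq {s : S} (hs : IsSumSq s) :
    ∃ d ∈ M, ∃ t : K, IsSumSq t ∧ algebraMap K S (d * d) * s = algebraMap K S t := by
  induction hs with
  | zero => exact ⟨1, M.one_mem, 0, .zero, by simp⟩
  | @sq_add a s _ ih =>
    obtain ⟨d, hd, t, ht, hdt⟩ := ih
    obtain ⟨⟨c, e⟩, rfl⟩ := mk'_surjective M a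
    refine ⟨e * d, M.mul_mem e.2 hd, c * d * (c * d) + e * e * t,
      .add (.mul_self _) ((IsSumSq.mul_self _).mul ht), ?_⟩
    rw [map_add, map_mul _ (e * e : K), ← hdt]
    simp only [map_mul]
    linear_combination (algebraMap K S d) ^ 2 * (mk' S c e * algebraMap K S e + algebraMap K S c) *
      mk'_spec S c e

theorem not_isSumSq_neg_one [IsFormallyReal K] [Nontrivial S] (hM : M ≤ nonZeroDivisors K) :
    ¬ IsSumSq (-1 : S) := by
  intro hs
  obtain ⟨d, hd, t, ht, hdt⟩ := exists_mul_self_mul_eq_algebraMap_of_isSumSq (M := M) hs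
  have hsum : d * d + t = 0 := IsLocalization.injective S hM <| by
    rw [map_add, ← hdt, map_zero]
    ring
  have hd0 := IsFormallyReal.eq_zero_of_add_right (.mul_self d) ht hsum
  simpa [hd0] using map_units S ⟨d * d, M.mul_mem hd hd⟩

end IsLocalization

/-- A prime ideal `I` of a commutative ring `R` is real if and only if
the fraction field of `R/I` is formally real. -/
theorem stmt_5 (R : Type*) [CommRing R] (I : Ideal R) (hI : I.IsPrime) :
    (∀ (n : ℕ) (u : Fin n → R), (∑ i, u i ^ 2) ∈ I → ∀ i, u i ∈ I) ↔
      ¬ IsSumSq (-1 : FractionRing (R ⧸ I)) := by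
  have := hI
  change I.IsReal ↔ _
  rw [← Ideal.isFormallyReal_quotient_iff]
  refine ⟨fun _ ↦ IsLocalization.not_isSumSq_neg_one (K := R ⧸ I) le_rfl, fun h ↦ ?_⟩
  have := isFormallyReal_iff_not_isSumSq_neg_one.mpr h
  exact .of_injective _ (IsFractionRing.injective (R ⧸ I) (FractionRing (R ⧸ I)))
end

section
/- Let $R$ be a formally real commutative ring (i.e., $-1$ is not a sum of squares in $R$). Let $\Sigma$ denote the set of sums of squares in $R$, and let $I$ be an ideal of $R$ that is maximal with respect to the property of being disjoint from $1 + \Sigma$. Then $I$ is a prime real ideal. -/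
/-!
`1 + Σ` is multiplicatively closed, so an ideal maximal among those avoiding it is prime.
For realness, suppose `x ^ 2 + t ∈ I` with `t ∈ Σ` but `x ∉ I`. By maximality `I + (x)` meets
`1 + Σ`, say `1 + s = a + r x` with `a ∈ I`. Squaring,
`(1 + s) ^ 2 + r ^ 2 t = a (a + 2 r x) + r ^ 2 (x ^ 2 + t) ∈ I`,
and the left-hand side lies in `1 + Σ`, a contradiction.
-/

section MaximalDisjoint

variable {R : Type*} [CommRing R]

variable (R) in
def oneAddSumSq : Submonoid R where
  carrier := {x | ∃ s, IsSumSq s ∧ 1 + s = x}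
  one_mem' := ⟨0, .zero, add_zero 1⟩
  mul_mem' := by
    rintro _ _ ⟨s, hs, rfl⟩ ⟨t, ht, rfl⟩
    exact ⟨s + t + s * t, (hs.add ht).add (hs.mul ht), by ring⟩

variable {I : Ideal R} (hdisj : ∀ s : R, IsSumSq s → 1 + s ∉ I)
  (hmax : ∀ J : Ideal R, I ≤ J → (∀ s : R, IsSumSq s → 1 + s ∉ J) → J = I)
include hdisj hmax

omit hdisj in
theorem exists_isSumSq_one_add_mem_of_lt {J : Ideal R} (hIJ : I < J) :
    ∃ s, IsSumSq s ∧ 1 + s ∈ J := by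
  by_contra! h
  exact hIJ.ne' (hmax J hIJ.le h)

theorem isPrime_of_maximal_disjoint_oneAddSumSq : I.IsPrime := by
  refine Ideal.isPrime_of_maximally_disjoint I (oneAddSumSq R) ?_ fun J hIJ => ?_
  · exact Set.disjoint_right.mpr fun _ ⟨s, hs, hx⟩ => hx ▸ hdisj s hs
  · obtain ⟨s, hs, hJ⟩ := exists_isSumSq_one_add_mem_of_lt hmax hIJ
    exact Set.not_disjoint_iff.mpr ⟨_, hJ, s, hs, rfl⟩

theorem mem_of_sq_add_mem_of_isSumSq {x t : R} (ht : IsSumSq t) (hxt : x ^ 2 + t ∈ I) :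
    x ∈ I := by
  by_contra hx
  obtain ⟨s, hs, hmem⟩ :=
    exists_isSumSq_one_add_mem_of_lt hmax (Submodule.lt_sup_iff_notMem.mpr hx)
  obtain ⟨a, ha, _, hrx, hsum⟩ := Submodule.mem_sup.mp hmem
  obtain ⟨r, rfl⟩ := Ideal.mem_span_singleton'.mp hrx
  have hsq : 1 + (s + s + s * s + r * r * t) = a * (a + 2 * (r * x)) + r ^ 2 * (x ^ 2 + t) := by
    linear_combination (-(1 + s + a + r * x)) * hsum
  have hsumSq : IsSumSq (s + s + s * s + r * r * t) :=
    ((hs.add hs).add (hs.mul hs)).add ((IsSumSq.mul_self r).mul ht)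
  exact hdisj _ hsumSq (hsq ▸ I.add_mem (I.mul_mem_right _ ha) (I.mul_mem_left _ hxt))

theorem mem_of_sum_sq_mem {ι : Type*} [DecidableEq ι] {S : Finset ι} (u : ι → R) (hu : ∑ i ∈ S, u i ^ 2 ∈ I)
    {i : ι} (hi : i ∈ S) : u i ∈ I := by
  rw [← Finset.add_sum_erase S _ hi] at hu
  exact mem_of_sq_add_mem_of_isSumSq hdisj hmax (IsSumSq.sum_sq _ u) hu

end MaximalDisjoint

theorem stmt_7_general (R : Type*) [CommRing R]
    (I : Ideal R)
    (hdisj : ∀ s : R, IsSumSq s → 1 + s ∉ I)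
    (hmax : ∀ J : Ideal R, I ≤ J → (∀ s : R, IsSumSq s → 1 + s ∉ J) → J = I) :
    I.IsPrime ∧ ∀ (n : ℕ) (u : Fin n → R), (∑ i, u i ^ 2) ∈ I → ∀ i, u i ∈ I :=
  ⟨isPrime_of_maximal_disjoint_oneAddSumSq hdisj hmax,
    fun _ u hu i => mem_of_sum_sq_mem hdisj hmax u hu (Finset.mem_univ i)⟩

/-- In a formally real commutative ring, an ideal maximal with respect to
being disjoint from `1 + Σ` (Σ the sums of squares) is a prime real ideal. -/
theorem stmt_7 (R : Type*) [CommRing R] (hR : ¬ IsSumSq (-1 : R))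
    (I : Ideal R)
    (hdisj : ∀ s : R, IsSumSq s → 1 + s ∉ I)
    (hmax : ∀ J : Ideal R, I ≤ J → (∀ s : R, IsSumSq s → 1 + s ∉ J) → J = I) :
    I.IsPrime ∧ ∀ (n : ℕ) (u : Fin n → R), (∑ i, u i ^ 2) ∈ I → ∀ i, u i ∈ I :=
  stmt_7_general R I hdisj hmax
end

section
/- Let $R$ be a commutative ring and $A$ a commutative $R$-algebra. Define the Rabinowitsch spectrum $RSpec(A)$ as the set of prime ideals of $A$ of the form $A \cap M$ (i.e., the contraction of $M$ to $A$), where $M$ ranges over maximal ideals of the polynomial ring $A[Y]$. Then for every ideal $I$ of $A$, the radical $rad(I)$ equals the intersection $\bigcap \{P \in RSpec(A) : I \subseteq P\}$. -/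
open Polynomial

/-- Rabinowitsch trick: if `a` is not in the radical of `I`, there is a maximal ideal of
`A[Y]` containing the extension of `I` and `1 - C a * Y`. -/
lemma rabinowitsch_aux {A : Type*} [CommRing A] (I : Ideal A) (a : A)
    (ha : a ∉ I.radical) :
    ∃ M : Ideal (Polynomial A), M.IsMaximal ∧ I ≤ M.comap Polynomial.C ∧
      a ∉ M.comap Polynomial.C := by
  -- find a prime Q ⊇ I with a ∉ Q
  rw [Ideal.radical_eq_sInf, Ideal.mem_sInf] at ha
  push_neg at ha
  obtain ⟨Q, ⟨hIQ, hQp⟩, haQ⟩ := ha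
  haveI := hQp
  -- map to fraction field of A/Q
  let K := FractionRing (A ⧸ Q)
  let φ : A →+* K := (algebraMap (A ⧸ Q) K).comp (Ideal.Quotient.mk Q)
  have hφa : φ a ≠ 0 := by
    simp only [φ, RingHom.comp_apply]
    intro h
    have := (map_eq_zero_iff _ (IsFractionRing.injective (A ⧸ Q) K)).mp h
    exact haQ (Ideal.Quotient.eq_zero_iff_mem.mp this)
  let ψ : Polynomial A →+* K := Polynomial.eval₂RingHom φ (φ a)⁻¹
  -- the Rabinowitsch ideal
  let J : Ideal (Polynomial A) := I.map Polynomial.C ⊔ Ideal.span {1 - Polynomial.C a * Polynomial.X}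
  have hJ : J ≤ RingHom.ker ψ := by
    refine sup_le ?_ ?_
    · rw [Ideal.map_le_iff_le_comap]
      intro x hx
      simp only [Ideal.mem_comap, RingHom.mem_ker, ψ, Polynomial.coe_eval₂RingHom,
        Polynomial.eval₂_C]
      simp only [φ, RingHom.comp_apply]
      rw [Ideal.Quotient.eq_zero_iff_mem.mpr (hIQ hx), map_zero]
    · rw [Ideal.span_le]
      intro x hx
      simp only [Set.mem_singleton_iff] at hx
      subst hx
      simp [RingHom.mem_ker, ψ, mul_inv_cancel₀ hφa]
  have hJne : J ≠ ⊤ := by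
    intro h
    have : (1 : Polynomial A) ∈ RingHom.ker ψ := hJ (h ▸ Submodule.mem_top)
    simp [RingHom.mem_ker] at this
  obtain ⟨M, hM, hJM⟩ := Ideal.exists_le_maximal J hJne
  refine ⟨M, hM, ?_, ?_⟩
  · intro x hx
    exact hJM (le_sup_left (α := Ideal (Polynomial A)) (Ideal.mem_map_of_mem _ hx))
  · intro haM
    have h1 : (1 - Polynomial.C a * Polynomial.X) ∈ M :=
      hJM (le_sup_right (α := Ideal (Polynomial A)) (Ideal.subset_span rfl))
    have h2 : Polynomial.C a * Polynomial.X ∈ M := M.mul_mem_right _ haM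
    have : (1 : Polynomial A) ∈ M := by
      have := M.add_mem h1 h2
      simpa using this
    exact hM.ne_top (Ideal.eq_top_of_isUnit_mem _ this isUnit_one)

/-- For a commutative `R`-algebra `A` and any ideal `I` of `A`, the radical
of `I` equals the intersection of the ideals in the Rabinowitsch spectrum of `A`
(contractions to `A` of maximal ideals of `A[Y]`) containing `I`. -/
theorem stmt_17 (R A : Type*) [CommRing R] [CommRing A] [Algebra R A] (I : Ideal A) :
    I.radical = sInf {P : Ideal A |
      (P.IsPrime ∧ ∃ M : Ideal (Polynomial A), M.IsMaximal ∧ P = M.comap Polynomial.C) ∧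
      I ≤ P} := by
  apply le_antisymm
  · apply le_sInf
    rintro P ⟨⟨hPp, -⟩, hIP⟩
    exact hPp.radical_le_iff.mpr hIP
  · intro a ha
    by_contra hna
    obtain ⟨M, hM, hIM, haM⟩ := rabinowitsch_aux I a hna
    rw [Ideal.mem_sInf] at ha
    exact haM (ha ⟨⟨Ideal.comap_isPrime _ _, M, hM, rfl⟩, hIM⟩)
end
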